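/- In the real-valued semantics, the induction axiom □(φ⇒○φ) ⇒ (φ⇒□φ) is globally true in every real Gödel temporal model, i.e. its truth value is 1 at every time point. -/

import Mathlib

/-- Formulas of the Gödel temporal language. -/
inductive GF where
  | var : Nat → GF
  | and : GF → GF → GF
  | or : GF → GF → GF
  | imp : GF → GF → GF
  | coimp : GF → GF → GF
  | next : GF → GF
  | dia : GF → GF
  | box : GF → GF
deriving DecidableEq

/-- ⊥ := p ⇐ p -/
def GF.bot : GF := .coimp (.var 0) (.var 0)
/-- ⊤ := p ⇒ p -/
def GF.top : GF := .imp (.var 0) (.var 0)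
/-- ¬φ := φ ⇒ ⊥ -/
def GF.neg (φ : GF) : GF := .imp φ .bot
/-- φ ⟺ ψ := (φ⇒ψ) ∧ (ψ⇒φ) -/
def GF.iffF (φ ψ : GF) : GF := .and (.imp φ ψ) (.imp ψ φ)

/-- A real Gödel temporal model: a flow (T,S) with a [0,1]-valued valuation
satisfying the standard Gödel semantic clauses. -/
structure RModel where
  T : Type
  S : T → T
  V : GF → T → ℝ
  mem_Icc : ∀ φ t, V φ t ∈ Set.Icc (0:ℝ) 1
  bot_eq : ∀ t, V .bot t = 0
  and_eq : ∀ φ ψ t, V (.and φ ψ) t = min (V φ t) (V ψ t)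
  or_eq : ∀ φ ψ t, V (.or φ ψ) t = max (V φ t) (V ψ t)
  imp_eq : ∀ φ ψ t, V (.imp φ ψ) t = if V φ t ≤ V ψ t then 1 else V ψ t
  coimp_eq : ∀ φ ψ t, V (.coimp φ ψ) t = if V ψ t < V φ t then V φ t else 0
  next_eq : ∀ φ t, V (.next φ) t = V φ (S t)
  dia_eq : ∀ φ t, V (.dia φ) t = ⨆ n : ℕ, V φ (S^[n] t)
  box_eq : ∀ φ t, V (.box φ) t = ⨅ n : ℕ, V φ (S^[n] t)

/-! The premise a := □(φ ⇒ ○φ) propagates the lower bound min a (φ at t) along the orbit of t: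
by residuation of the Gödel implication, a ≤ (φ ⇒ ○φ) at Sⁿ t means min a (φ at Sⁿ t) ≤ φ at Sⁿ⁺¹ t.
Hence min a (φ at t) ≤ □φ at t, which by residuation again is a ≤ (φ ⇒ □φ) at t, and so the outer
implication takes the value 1. -/

theorem min_le_of_forall_min_le_succ {α : Type*} [LinearOrder α] {c : α} {u : ℕ → α}
    (h : ∀ n, min c (u n) ≤ u (n + 1)) (n : ℕ) : min c (u 0) ≤ u n := by
  induction n with
  | zero => exact min_le_right _ _
  | succ n ih => exact (le_min (min_le_left _ _) ih).trans (h n)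

namespace RModel

variable (M : RModel)

theorem V_le_one (φ : GF) (t : M.T) : M.V φ t ≤ 1 := (M.mem_Icc φ t).2

theorem bddBelow_range_V_iterate (φ : GF) (t : M.T) :
    BddBelow (Set.range fun n : ℕ => M.V φ (M.S^[n] t)) :=
  ⟨0, by rintro _ ⟨n, rfl⟩; exact (M.mem_Icc φ _).1⟩

variable {M}

theorem V_imp_eq_one_iff {φ ψ : GF} {t : M.T} : M.V (.imp φ ψ) t = 1 ↔ M.V φ t ≤ M.V ψ t := by
  rw [M.imp_eq]
  split_ifs with h
  · simpa using h
  · exact iff_of_false (fun h1 => h (h1 ▸ M.V_le_one φ t)) h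

theorem le_V_imp_iff {φ ψ : GF} {t : M.T} {c : ℝ} (hc : c ≤ 1) :
    c ≤ M.V (.imp φ ψ) t ↔ min c (M.V φ t) ≤ M.V ψ t := by
  rw [M.imp_eq]
  split_ifs with h
  · exact iff_of_true hc ((min_le_right _ _).trans h)
  · simp [h]

theorem le_V_box_iff {φ : GF} {t : M.T} {c : ℝ} :
    c ≤ M.V (.box φ) t ↔ ∀ n : ℕ, c ≤ M.V φ (M.S^[n] t) := by
  rw [M.box_eq, le_ciInf_iff (M.bddBelow_range_V_iterate φ t)]

theorem min_V_box_imp_next_le (φ : GF) (t : M.T) (n : ℕ) :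
    min (M.V (.box (.imp φ (.next φ))) t) (M.V φ (M.S^[n] t)) ≤ M.V φ (M.S^[n + 1] t) := by
  have h := (le_V_box_iff (M := M) (φ := .imp φ (.next φ)) (t := t)).1 le_rfl n
  rwa [le_V_imp_iff (M.V_le_one _ _), M.next_eq, ← Function.iterate_succ_apply' M.S] at h

end RModel

/-- In the real semantics, the induction axiom □(φ⇒○φ) ⇒ (φ⇒□φ) has truth
value 1 at every time point of every real Gödel temporal model. -/
theorem stmt7 (M : RModel) (φ : GF) (t : M.T) :
    M.V (.imp (.box (.imp φ (.next φ))) (.imp φ (.box φ))) t = 1 := by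
  rw [RModel.V_imp_eq_one_iff, RModel.le_V_imp_iff (M.V_le_one _ _), RModel.le_V_box_iff]
  exact min_le_of_forall_min_le_succ (u := fun n => M.V φ (M.S^[n] t))
    (M.min_V_box_imp_next_le φ t)
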